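/- arXiv:1009.2778 — 2 statements merged into one kernel-verified Lean document; each statement's English description precedes it below -/
import Mathlib

section
/- Regular extension of a one-field Gibbons–Tsarev system: let f(x,y,u), h(x,y,u) be smooth functions, defined for x ≠ y, with h symmetric in (x,y), which satisfy the compatibility identities (E1) and (E2) for all pairwise distinct x, y, z and all u. Then the extension of the system by a new field v via ∂_i v = f(p_i, v, u) ∂_i u is compatible: setting g(p,u,v) = f(p,v,u), the expression E(x,y) = g_1(x,u,v)·f(y,x,u) + g_2(x,u,v) + g_3(x,u,v)·g(y,u,v) + g(x,u,v)·h(x,y,u) satisfies E(x,y) = E(y,x) for all x, y, v pairwise distinct and all u. -/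
/-- Partial derivative of a three-argument function in its first argument. -/
noncomputable def d1 (F : ℝ → ℝ → ℝ → ℝ) (x y u : ℝ) : ℝ := deriv (fun s => F s y u) x
/-- Partial derivative of a three-argument function in its second argument. -/
noncomputable def d2 (F : ℝ → ℝ → ℝ → ℝ) (x y u : ℝ) : ℝ := deriv (fun s => F x s u) y
/-- Partial derivative of a three-argument function in its third argument. -/
noncomputable def d3 (F : ℝ → ℝ → ℝ → ℝ) (x y u : ℝ) : ℝ := deriv (fun s => F x y s) u

/-- Left-hand side of the first Gibbons–Tsarev compatibility identity (E1). -/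
noncomputable def gtE1 (f h : ℝ → ℝ → ℝ → ℝ) (x y z u : ℝ) : ℝ :=
  d3 f y z u - d3 f x z u + d1 f y z u * f x y u - d1 f x z u * f y x u
    + d2 f y z u * f x z u - d2 f x z u * f y z u + (f y z u - f x z u) * h x y u

/-- Left-hand side of the second Gibbons–Tsarev compatibility identity (E2). -/
noncomputable def gtE2 (f h : ℝ → ℝ → ℝ → ℝ) (x y z u : ℝ) : ℝ :=
  d3 h y z u - d3 h x z u + d1 h y z u * f x y u - d1 h x z u * f y x u
    + d2 h y z u * f x z u - d2 h x z u * f y z u + (h y z u - h x z u) * h x y u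

/-- The compatibility expression `E(x,y)` for an extension `∂ᵢv = g(pᵢ,u,v) ∂ᵢu`. -/
noncomputable def extE (f h g : ℝ → ℝ → ℝ → ℝ) (x y u v : ℝ) : ℝ :=
  deriv (fun s => g s u v) x * f y x u + deriv (fun s => g x s v) u
    + deriv (fun s => g x u s) v * g y u v + g x u v * h x y u

/-- regular extension: if smooth data `f, h` (defined for `x ≠ y`, `h`
symmetric) satisfy the Gibbons–Tsarev compatibility identities (E1) and (E2), then the
extension by a new field `v` via `∂ᵢv = f(pᵢ, v, u) ∂ᵢu`, i.e. `g(p,u,v) = f(p,v,u)`,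
is compatible: `E(x,y) = E(y,x)` for pairwise distinct `x, y, v` and all `u`. -/
theorem stmt_7 (f h : ℝ → ℝ → ℝ → ℝ)
    (hfs : ContDiffOn ℝ (⊤ : ℕ∞) (fun w : ℝ × ℝ × ℝ => f w.1 w.2.1 w.2.2)
      {w : ℝ × ℝ × ℝ | w.1 ≠ w.2.1})
    (hhs : ContDiffOn ℝ (⊤ : ℕ∞) (fun w : ℝ × ℝ × ℝ => h w.1 w.2.1 w.2.2)
      {w : ℝ × ℝ × ℝ | w.1 ≠ w.2.1})
    (hsym : ∀ x y u : ℝ, x ≠ y → h x y u = h y x u)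
    (hE1 : ∀ u x y z : ℝ, x ≠ y → x ≠ z → y ≠ z → gtE1 f h x y z u = 0)
    (hE2 : ∀ u x y z : ℝ, x ≠ y → x ≠ z → y ≠ z → gtE2 f h x y z u = 0)
    (g : ℝ → ℝ → ℝ → ℝ) (hg : ∀ p u v : ℝ, g p u v = f p v u) :
    ∀ (x y v u : ℝ), x ≠ y → x ≠ v → y ≠ v →
      extE f h g x y u v = extE f h g y x u v := by
  intro x y v u hxy hxv hyv
  have key := hE1 u x y v hxy hxv hyv
  have hs := hsym x y u hxy
  simp only [extE, gtE1, d1, d2, d3, hg] at key ⊢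
  linear_combination -key + f y v u * hs
end

section
/- Compatibility of the triangular Gibbons–Tsarev system of the Benney chain: for m ≥ 1 define g_m(x, u) = x^{m−1} − Σ_{k=1}^{m−2} k·u_k·x^{m−2−k} in variables x and u = (u_1, u_2, …) (so g_1 = 1). Then for every m ≥ 1 the expression E_m(x, y, u) = (∂g_m/∂x)(x,u)/(y − x) + Σ_{k=1}^{m−2} (∂g_m/∂u_k)(x,u)·g_k(y,u) + 2·g_m(x,u)/(x − y)² is symmetric under interchanging x and y: E_m(x, y, u) = E_m(y, x, u) for all x ≠ y and all u. (Equivalently, the relations ∂_i u_m = g_m(p_i, u) ∂_i u_1 are compatible with the Gibbons–Tsarev equations ∂_i p_j = ∂_i u_1/(p_i − p_j), ∂_i ∂_j u_1 = 2 ∂_i u_1 ∂_j u_1/(p_i − p_j)².) -/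
/-!
Clearing denominators, `(x - y)² E_{n+1}(x, y)` equals
`g_{n+1}(x) + g_{n+1}(y) + n (x - y) (g_n(y) - g_n(x))`, which is visibly symmetric.
This is proved by induction on `n` from the recursion `g_{n+2} = x g_{n+1} - n u_n`,
which also yields recursions for `∂_x g` and for the sum `Σ_k (∂g_m/∂u_k)(x) g_k(y)`.
-/

/-- The Benney coefficient `g_m(x,u) = x^{m−1} − Σ_{k=1}^{m−2} k u_k x^{m−2−k}`. -/
noncomputable def gB (m : ℕ) (x : ℝ) (u : ℕ → ℝ) : ℝ :=
  x ^ (m - 1) - ∑ k ∈ Finset.Icc 1 (m - 2), (k : ℝ) * u k * x ^ (m - 2 - k)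

/-- The compatibility expression
`E_m(x,y,u) = (∂g_m/∂x)(x,u)/(y−x) + Σ_{k=1}^{m−2} (∂g_m/∂u_k)(x,u) g_k(y,u)
  + 2 g_m(x,u)/(x−y)²`. -/
noncomputable def EB (m : ℕ) (x y : ℝ) (u : ℕ → ℝ) : ℝ :=
  deriv (fun s => gB m s u) x / (y - x)
    + (∑ k ∈ Finset.Icc 1 (m - 2),
        deriv (fun t => gB m x (Function.update u k t)) (u k) * gB k y u)
    + 2 * gB m x u / (x - y) ^ 2

open Finset

lemma sum_Icc_one_mul_pow_succ {R : Type*} [CommSemiring R] (c : ℕ → R) (x : R) (n : ℕ) :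
    ∑ k ∈ Icc 1 (n + 1), c k * x ^ (n + 1 - k)
      = x * ∑ k ∈ Icc 1 n, c k * x ^ (n - k) + c (n + 1) := by
  rw [sum_Icc_succ_top (by omega), mul_sum, Nat.sub_self, pow_zero, mul_one]
  congr 1
  refine sum_congr rfl fun k hk => ?_
  rw [Nat.sub_add_comm (mem_Icc.mp hk).2, pow_succ]
  ring

lemma gB_add_two (n : ℕ) (x : ℝ) (u : ℕ → ℝ) :
    gB (n + 2) x u = x * gB (n + 1) x u - n * u n := by
  cases n with
  | zero => simp [gB]
  | succ n =>
    simp only [gB, Nat.add_sub_cancel, show n + 1 + 2 - 2 = n + 1 by omega,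
      show n + 1 + 1 - 2 = n by omega, show n + 1 + 2 - 1 = n + 2 by omega]
    rw [sum_Icc_one_mul_pow_succ (fun k => (k : ℝ) * u k)]
    push_cast
    ring

lemma gB_update {m k : ℕ} (hk : k ∈ Icc 1 (m - 2)) (x : ℝ) (u : ℕ → ℝ) (t : ℝ) :
    gB m x (Function.update u k t) = gB m x u - k * x ^ (m - 2 - k) * (t - u k) := by
  simp only [gB, ← add_sum_erase _ _ hk, Function.update_self]
  rw [sum_congr rfl fun j hj => by rw [Function.update_of_ne (ne_of_mem_erase hj)]]
  ring

lemma deriv_gB_update {m k : ℕ} (hk : k ∈ Icc 1 (m - 2)) (x : ℝ) (u : ℕ → ℝ) :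
    deriv (fun t => gB m x (Function.update u k t)) (u k) = -(k * x ^ (m - 2 - k)) := by
  simp [gB_update hk]

lemma differentiable_gB (m : ℕ) (u : ℕ → ℝ) : Differentiable ℝ fun s => gB m s u := by
  unfold gB; fun_prop

lemma deriv_gB_add_two (n : ℕ) (x : ℝ) (u : ℕ → ℝ) :
    deriv (fun s => gB (n + 2) s u) x
      = gB (n + 1) x u + x * deriv (fun s => gB (n + 1) s u) x := by
  simp only [gB_add_two]
  rw [deriv_sub_const, deriv_fun_mul differentiableAt_fun_id (differentiable_gB _ u x), deriv_id'',
    one_mul]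

/-- The sum `Σ_k (∂g_m/∂u_k)(x, u) g_k(y, u)` of `EB`, with `∂g_m/∂u_k = -k x^{m-2-k}`. -/
noncomputable def gBCoupling (m : ℕ) (x y : ℝ) (u : ℕ → ℝ) : ℝ :=
  -∑ k ∈ Icc 1 (m - 2), k * gB k y u * x ^ (m - 2 - k)

lemma gBCoupling_add_two (n : ℕ) (x y : ℝ) (u : ℕ → ℝ) :
    gBCoupling (n + 2) x y u = x * gBCoupling (n + 1) x y u - n * gB n y u := by
  cases n with
  | zero => simp [gBCoupling]
  | succ n =>
    simp only [gBCoupling, show n + 1 + 2 - 2 = n + 1 by omega, show n + 1 + 1 - 2 = n by omega]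
    rw [sum_Icc_one_mul_pow_succ (fun k => (k : ℝ) * gB k y u)]
    ring

lemma sum_deriv_gB_update_mul (m : ℕ) (x y : ℝ) (u : ℕ → ℝ) :
    ∑ k ∈ Icc 1 (m - 2), deriv (fun t => gB m x (Function.update u k t)) (u k) * gB k y u
      = gBCoupling m x y u := by
  rw [gBCoupling, ← sum_neg_distrib]
  exact sum_congr rfl fun k hk => by rw [deriv_gB_update hk]; ring

lemma natCast_mul_gB_succ_sub (n : ℕ) (x y : ℝ) (u : ℕ → ℝ) :
    (n : ℝ) * (gB (n + 1) y u - gB (n + 1) x u) = n * (y * gB n y u - x * gB n x u) := by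
  cases n with
  | zero => simp
  | succ n => rw [gB_add_two, gB_add_two]; ring

lemma EB_numerator_eq (n : ℕ) (x y : ℝ) (u : ℕ → ℝ) :
    (x - y) ^ 2 * gBCoupling (n + 1) x y u - (x - y) * deriv (fun s => gB (n + 1) s u) x
        + 2 * gB (n + 1) x u
      = gB (n + 1) x u + gB (n + 1) y u + n * (x - y) * (gB n y u - gB n x u) := by
  induction n with
  | zero => norm_num [gBCoupling, gB]
  | succ n ih =>
    rw [gBCoupling_add_two, deriv_gB_add_two, gB_add_two n x, gB_add_two n y]
    push_cast
    linear_combination x * ih - (x - y) * natCast_mul_gB_succ_sub n x y u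

lemma EB_mul_sq (n : ℕ) {x y : ℝ} (hxy : x ≠ y) (u : ℕ → ℝ) :
    EB (n + 1) x y u * (x - y) ^ 2
      = gB (n + 1) x u + gB (n + 1) y u + n * (x - y) * (gB n y u - gB n x u) := by
  have hxy' : x - y ≠ 0 := sub_ne_zero.mpr hxy
  rw [← EB_numerator_eq, EB, sum_deriv_gB_update_mul]
  field_simp
  ring

/-- compatibility of the triangular Gibbons–Tsarev system of the Benney
chain: for every `m ≥ 1`, the expression `E_m(x,y,u)` is symmetric under interchanging
`x` and `y`, for all `x ≠ y` and all `u`. -/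
theorem stmt_19 :
    ∀ m : ℕ, 1 ≤ m → ∀ x y : ℝ, x ≠ y → ∀ u : ℕ → ℝ,
      EB m x y u = EB m y x u := by
  intro m hm x y hxy u
  obtain ⟨n, rfl⟩ := Nat.exists_eq_add_of_le' hm
  apply mul_right_cancel₀ (pow_ne_zero 2 (sub_ne_zero.mpr hxy))
  rw [EB_mul_sq n hxy, sub_sq_comm x y, EB_mul_sq n hxy.symm]
  ring
end
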